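/- arXiv:2301.10212 — 7 statements merged into one kernel-verified Lean document; each statement's English description precedes it below -/
import Mathlib

section
/- Let a and b be integers with a ≤ −1 and b ≥ 1, and set p = 1 − ab and q = b. Then p and q are coprime positive integers with q < p, and η(p,q) = −ab(a+b)/(3(1 − ab)) as rational numbers. -/
open Finset in
/-- The eta invariant of the signature operator of the lens space `L(p,q)`,
for coprime positive integers `q < p`:
`η(p,q) = ((p−1)(2pq−3p−q+3))/(3p) − (2/p)·Σ_{k=1}^{q−1} ⌊kp/q⌋²`. -/
noncomputable def etaInv (p q : ℤ) : ℚ :=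
  (((p - 1) * (2 * p * q - 3 * p - q + 3) : ℤ) : ℚ) / (3 * (p : ℚ))
    - 2 / (p : ℚ) * ∑ k ∈ Finset.Icc (1 : ℤ) (q - 1), ((⌊((k * p : ℤ) : ℚ) / ((q : ℤ) : ℚ)⌋ : ℚ)) ^ 2

open Finset in
lemma sum_sq_Icc (n : ℕ) :
    ∑ k ∈ Finset.Icc (1 : ℤ) (n : ℤ), (k : ℚ) ^ 2 = (n : ℚ) * (n + 1) * (2 * n + 1) / 6 := by
  induction n with
  | zero => norm_num
  | succ n ih =>
    have hins : Finset.Icc (1 : ℤ) ((n : ℤ) + 1) = insert ((n : ℤ) + 1) (Finset.Icc 1 (n : ℤ)) := by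
      ext k; simp [Finset.mem_insert]; omega
    rw [show ((n + 1 : ℕ) : ℤ) = (n : ℤ) + 1 by push_cast; ring, hins,
      Finset.sum_insert (by simp), ih]
    push_cast
    ring

lemma sum_sq_Icc' (b : ℤ) (hb : 1 ≤ b) :
    ∑ k ∈ Finset.Icc (1 : ℤ) (b - 1), (k : ℚ) ^ 2 = ((b : ℚ) - 1) * b * (2 * b - 1) / 6 := by
  obtain ⟨n, hn⟩ : ∃ n : ℕ, b - 1 = (n : ℤ) := ⟨(b - 1).toNat, by omega⟩
  have hbn : (b : ℚ) = (n : ℚ) + 1 := by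
    have : b = (n : ℤ) + 1 := by omega
    exact_mod_cast congrArg (Int.cast : ℤ → ℚ) this
  rw [hn, sum_sq_Icc, hbn]
  ring

/-- For integers `a ≤ -1` and `b ≥ 1`, with `p = 1 - ab` and `q = b`, the integers `p` and `q`
are coprime and positive with `q < p`, and `η(p,q) = −ab(a+b)/(3(1 − ab))`. -/
theorem eta_invariant_pos_case (a b : ℤ) (ha : a ≤ -1) (hb : 1 ≤ b) :
    0 < b ∧ b < 1 - a * b ∧ IsCoprime (1 - a * b) b ∧
      etaInv (1 - a * b) b = -((a : ℚ) * b * (a + b)) / (3 * (1 - (a : ℚ) * b)) := by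
  have hab : a * b ≤ -1 := by nlinarith
  have hp : (0 : ℤ) < 1 - a * b := by linarith
  have hbq : (0 : ℚ) < (b : ℚ) := by exact_mod_cast hb
  have hpq : (0 : ℚ) < 1 - (a : ℚ) * b := by
    have := hp; exact_mod_cast this
  refine ⟨by linarith, by nlinarith, ⟨1, a, by ring⟩, ?_⟩
  have hfloor : ∀ k ∈ Finset.Icc (1 : ℤ) (b - 1),
      ((⌊((k * (1 - a * b) : ℤ) : ℚ) / ((b : ℤ) : ℚ)⌋ : ℚ)) ^ 2 = ((a : ℚ) * k) ^ 2 := by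
    intro k hk
    rw [Finset.mem_Icc] at hk
    have hk1 : (1 : ℚ) ≤ (k : ℚ) := by exact_mod_cast hk.1
    have hk2 : (k : ℚ) ≤ (b : ℚ) - 1 := by
      have := hk.2; push_cast; exact_mod_cast this
    have : ⌊((k * (1 - a * b) : ℤ) : ℚ) / ((b : ℤ) : ℚ)⌋ = -(k * a) := by
      rw [Int.floor_eq_iff]
      push_cast
      constructor
      · rw [le_div_iff₀ hbq]; nlinarith
      · rw [div_lt_iff₀ hbq]; nlinarith
    rw [this]
    push_cast
    ring
  rw [etaInv, Finset.sum_congr rfl hfloor]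
  have hsum : ∑ k ∈ Finset.Icc (1 : ℤ) (b - 1), ((a : ℚ) * k) ^ 2
      = (a : ℚ) ^ 2 * (((b : ℚ) - 1) * b * (2 * b - 1) / 6) := by
    rw [← sum_sq_Icc' b hb, Finset.mul_sum]
    exact Finset.sum_congr rfl fun k _ => by ring
  rw [hsum]
  have h1 : ((1 - a * b : ℤ) : ℚ) = 1 - (a : ℚ) * b := by push_cast; ring
  push_cast
  field_simp
  ring
end

section
/- Let a and b be integers with a ≤ −2 and b ≤ −2, and set p = ab − 1 and q = −b. Then p and q are coprime positive integers with q < p, and η(p,q) = (a²b + ab²)/(3(ab − 1)) + 2 as rational numbers. -/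
lemma sum_sq_aux (a : ℤ) (N : ℕ) :
    6 * ∑ k ∈ Finset.Icc (1:ℤ) (N:ℤ), (k*a+1)^2
      = a^2*N*(N+1)*(2*N+1) + 6*a*N*(N+1) + 6*N := by
  induction N with
  | zero => simp
  | succ n ih =>
    have hins : Finset.Icc (1:ℤ) ((n:ℤ)+1) = insert ((n:ℤ)+1) (Finset.Icc (1:ℤ) (n:ℤ)) := by
      ext x; simp only [Finset.mem_Icc, Finset.mem_insert]; omega
    rw [Nat.cast_succ, hins, Finset.sum_insert (by simp only [Finset.mem_Icc]; omega)]
    push_cast at ih ⊢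
    linear_combination ih

/-- For integers `a ≤ -2` and `b ≤ -2`, with `p = ab − 1` and `q = −b`, the integers `p` and `q`
are coprime and positive with `q < p`, and `η(p,q) = (a²b + ab²)/(3(ab − 1)) + 2`. -/
theorem eta_invariant_neg_case (a b : ℤ) (ha : a ≤ -2) (hb : b ≤ -2) :
    0 < -b ∧ -b < a * b - 1 ∧ IsCoprime (a * b - 1) (-b) ∧
      etaInv (a * b - 1) (-b) =
        ((a : ℚ) ^ 2 * b + (a : ℚ) * b ^ 2) / (3 * ((a : ℚ) * b - 1)) + 2 := by
  have hb0 : (0:ℤ) < -b := by linarith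
  have hp : (0:ℤ) < a * b - 1 := by nlinarith
  refine ⟨hb0, by nlinarith, ⟨-1, -a, by ring⟩, ?_⟩
  set N : ℕ := (-b-1).toNat with hNdef
  have hN : (N:ℤ) = -b - 1 := Int.toNat_of_nonneg (by linarith)
  have hbq : (0:ℚ) < ((-b : ℤ) : ℚ) := by exact_mod_cast hb0
  have hfloor : ∀ k ∈ Finset.Icc (1:ℤ) (-b-1),
      ⌊((k * (a*b-1) : ℤ) : ℚ) / (((-b : ℤ) : ℤ) : ℚ)⌋ = -(k*a+1) := by
    intro k hk
    simp only [Finset.mem_Icc] at hk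
    have hk1 : (1:ℚ) ≤ (k:ℚ) := by exact_mod_cast hk.1
    have hk2 : (k:ℚ) ≤ -(b:ℚ) - 1 := by exact_mod_cast hk.2
    have haq : (a:ℚ) ≤ -2 := by exact_mod_cast ha
    have hbqq : (b:ℚ) ≤ -2 := by exact_mod_cast hb
    rw [Int.floor_eq_iff]
    constructor
    · rw [le_div_iff₀ hbq]; push_cast; nlinarith
    · rw [div_lt_iff₀ hbq]; push_cast; nlinarith
  have hsum : ∑ k ∈ Finset.Icc (1:ℤ) (-b - 1),
      ((⌊((k * (a*b-1) : ℤ) : ℚ) / ((((-b : ℤ)) : ℤ) : ℚ)⌋ : ℚ)) ^ 2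
      = ((∑ k ∈ Finset.Icc (1:ℤ) (-b-1), (k*a+1)^2 : ℤ) : ℚ) := by
    rw [Int.cast_sum]
    refine Finset.sum_congr rfl fun k hk => ?_
    rw [hfloor k hk]
    push_cast
    ring
  have hS6 : (6:ℤ) * ∑ k ∈ Finset.Icc (1:ℤ) (-b-1), (k*a+1)^2
      = a^2*(-b-1)*(-b)*(2*(-b-1)+1) + 6*a*(-b-1)*(-b) + 6*(-b-1) := by
    have h := sum_sq_aux a N
    rw [hN] at h
    linear_combination h
  have hSval : ((∑ k ∈ Finset.Icc (1:ℤ) (-b-1), (k*a+1)^2 : ℤ) : ℚ)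
      = ((a:ℚ)^2*(-b-1)*(-b)*(2*(-b-1)+1) + 6*a*(-b-1)*(-b) + 6*(-b-1)) / 6 := by
    have hS6Q : (6:ℚ) * ((∑ k ∈ Finset.Icc (1:ℤ) (-b-1), (k*a+1)^2 : ℤ) : ℚ)
        = (a:ℚ)^2*(-b-1)*(-b)*(2*(-b-1)+1) + 6*a*(-b-1)*(-b) + 6*(-b-1) := by
      exact_mod_cast hS6
    rw [eq_div_iff (by norm_num : (6:ℚ) ≠ 0)]
    linear_combination hS6Q
  have hpQ : (a:ℚ) * b - 1 ≠ 0 := by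
    have : ((a*b - 1 : ℤ) : ℚ) ≠ 0 := by exact_mod_cast hp.ne'
    push_cast at this; exact this
  unfold etaInv
  rw [hsum, hSval]
  push_cast
  field_simp
  ring
end

section
/- Let p and q be coprime integers with 0 < q < p. Then η(p, p − q) = −η(p, q) as rational numbers. -/
open Finset

/-- floor of integer division as rationals equals integer ediv, for positive denominator -/
lemma floor_cast_div (a b : ℤ) (hb : 0 < b) :
    ⌊((a : ℚ)) / ((b : ℤ) : ℚ)⌋ = a / b := by
  lift b to ℕ using hb.le
  exact_mod_cast Rat.floor_intCast_div_natCast a _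

/-- bounds for ediv with coprimality: strict lower bound -/
lemma ediv_bounds (p q k : ℤ) (hcop : IsCoprime q p) (hq : 0 < q)
    (hk : k ∈ Icc (1 : ℤ) (q - 1)) :
    q * (k * p / q) < k * p ∧ k * p < q * (k * p / q) + q := by
  simp only [mem_Icc] at hk
  have h1 : k * p / q * q ≤ k * p := Int.ediv_mul_le _ hq.ne'
  have h2 : k * p < (k * p / q + 1) * q := Int.lt_ediv_add_one_mul_self _ hq
  have hne : k * p / q * q ≠ k * p := by
    intro h
    have hdvd : q ∣ k * p := ⟨k * p / q, by linarith [h]⟩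
    have : q ∣ k := hcop.dvd_of_dvd_mul_right hdvd
    have := Int.le_of_dvd (by omega) this
    omega
  constructor
  · nlinarith [lt_of_le_of_ne h1 hne]
  · nlinarith

lemma key_sum (p q : ℤ) (hpq : IsCoprime p q) (hq : 0 < q) (hqp : q < p) :
    (∑ k ∈ Icc (1 : ℤ) (q - 1), (k * p / q) ^ 2)
      + (∑ k ∈ Icc (1 : ℤ) (p - q - 1), (k * p / (p - q)) ^ 2)
      = ∑ m ∈ Icc (1 : ℤ) (p - 2), m ^ 2 := by
  have hq' : 0 < p - q := by omega
  have hcop1 : IsCoprime q p := hpq.symm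
  have hcop2 : IsCoprime (p - q) p := by
    have : IsCoprime p (-q + p * 1) := (hpq.neg_right).add_mul_left_right 1
    have h2 : IsCoprime p (p - q) := by simpa [sub_eq_neg_add, mul_one] using this
    exact h2.symm
  -- images
  set g1 : ℤ → ℤ := fun k => k * p / q with hg1
  set g2 : ℤ → ℤ := fun k => k * p / (p - q) with hg2
  have hbound1 := fun k hk => ediv_bounds p q k hcop1 hq hk
  have hbound2 := fun k hk => ediv_bounds p (p - q) k hcop2 hq' hk
  -- injectivity
  have hinj : ∀ (r : ℤ) (hr : 0 < r) (hrp : r < p),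
      (∀ k ∈ Icc (1:ℤ) (r-1), r * (k*p/r) < k*p ∧ k*p < r * (k*p/r) + r) →
      Set.InjOn (fun k => k * p / r) (Icc (1:ℤ) (r-1)) := by
    intro r hr hrp hb k hk k' hk' he
    simp only at he
    obtain ⟨b1, b2⟩ := hb k hk
    obtain ⟨b1', b2'⟩ := hb k' hk'
    rw [he] at b1 b2
    have : (k - k') * p = k * p - k' * p := by ring
    have hlt : |k - k'| * p < r * 1 + r := by
      rcases abs_cases (k - k') with ⟨h, _⟩ | ⟨h, _⟩ <;> nlinarith
    have hge : 0 ≤ |k - k'| := abs_nonneg _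
    nlinarith [abs_nonneg (k - k'), hlt]
  have hinj1 := hinj q hq hqp hbound1
  have hinj2 := hinj (p - q) hq' (by omega) hbound2
  -- subset of Icc 1 (p-2)
  have hsub : ∀ (r : ℤ) (hr : 0 < r) (hrp : r < p),
      (∀ k ∈ Icc (1:ℤ) (r-1), r * (k*p/r) < k*p ∧ k*p < r * (k*p/r) + r) →
      (Icc (1:ℤ) (r-1)).image (fun k => k * p / r) ⊆ Icc 1 (p - 2) := by
    intro r hr hrp hb m hm
    simp only [mem_image] at hm
    obtain ⟨k, hk, rfl⟩ := hm
    obtain ⟨b1, b2⟩ := hb k hk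
    simp only [mem_Icc] at hk ⊢
    constructor
    · nlinarith
    · nlinarith
  have hsub1 := hsub q hq hqp hbound1
  have hsub2 := hsub (p - q) hq' (by omega) hbound2
  -- disjoint
  have hdisj : Disjoint ((Icc (1:ℤ) (q-1)).image g1) ((Icc (1:ℤ) (p-q-1)).image g2) := by
    rw [Finset.disjoint_left]
    intro m hm1 hm2
    simp only [mem_image, hg1, hg2] at hm1 hm2
    obtain ⟨k, hk, hke⟩ := hm1
    obtain ⟨k', hk', hke'⟩ := hm2
    obtain ⟨b1, b2⟩ := hbound1 k hk
    obtain ⟨b1', b2'⟩ := hbound2 k' hk'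
    rw [hke] at b1 b2
    rw [hke'] at b1' b2'
    have h1 : p * m < (k + k') * p := by nlinarith
    have h2 : (k + k') * p < p * m + p := by nlinarith
    have : m < k + k' := by nlinarith
    have : k + k' < m + 1 := by nlinarith
    omega
  -- union is everything
  have hcard1 : ((Icc (1:ℤ) (q-1)).image g1).card = (q - 1).toNat := by
    rw [Finset.card_image_of_injOn hinj1, Int.card_Icc]; congr 1; omega
  have hcard2 : ((Icc (1:ℤ) (p-q-1)).image g2).card = (p - q - 1).toNat := by
    rw [Finset.card_image_of_injOn hinj2, Int.card_Icc]; congr 1; omega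
  have hunion : ((Icc (1:ℤ) (q-1)).image g1) ∪ ((Icc (1:ℤ) (p-q-1)).image g2)
      = Icc (1:ℤ) (p - 2) := by
    apply Finset.eq_of_subset_of_card_le (Finset.union_subset hsub1 hsub2)
    rw [Finset.card_union_of_disjoint hdisj, hcard1, hcard2, Int.card_Icc]
    omega
  calc (∑ k ∈ Icc (1 : ℤ) (q - 1), (k * p / q) ^ 2)
      + (∑ k ∈ Icc (1 : ℤ) (p - q - 1), (k * p / (p - q)) ^ 2)
      = (∑ m ∈ (Icc (1:ℤ) (q-1)).image g1, m ^ 2)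
        + (∑ m ∈ (Icc (1:ℤ) (p-q-1)).image g2, m ^ 2) := by
        rw [Finset.sum_image hinj1, Finset.sum_image hinj2]
    _ = ∑ m ∈ ((Icc (1:ℤ) (q-1)).image g1) ∪ ((Icc (1:ℤ) (p-q-1)).image g2), m ^ 2 :=
        (Finset.sum_union hdisj).symm
    _ = ∑ m ∈ Icc (1 : ℤ) (p - 2), m ^ 2 := by rw [hunion]

lemma six_sum_sq : ∀ n : ℤ, 0 ≤ n →
    6 * ∑ m ∈ Icc (1 : ℤ) n, m ^ 2 = n * (n + 1) * (2 * n + 1) := by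
  refine Int.le_induction ?_ ?_
  · simp
  · intro n hn ih
    have hins : Icc (1 : ℤ) (n + 1) = insert (n + 1) (Icc 1 n) := by
      ext x; simp only [mem_Icc, mem_insert]; omega
    rw [hins, Finset.sum_insert (by simp), mul_add, ih]
    ring



/-- For coprime integers `0 < q < p`, one has `η(p, p − q) = −η(p, q)`:
replacing `q` by `p − q` reverses the orientation of the lens space and flips
the sign of the eta invariant. -/
theorem eta_invariant_orientation_reversal (p q : ℤ) (hpq : IsCoprime p q)
    (hq : 0 < q) (hqp : q < p) :
    etaInv p (p - q) = -etaInv p q := by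
  have hq' : 0 < p - q := by omega
  have hp : (p : ℚ) ≠ 0 := by exact_mod_cast (by omega : p ≠ 0)
  have hsum : ∀ r : ℤ, 0 < r →
      (∑ k ∈ Finset.Icc (1 : ℤ) (r - 1), ((⌊((k * p : ℤ) : ℚ) / ((r : ℤ) : ℚ)⌋ : ℚ)) ^ 2)
        = ((∑ k ∈ Finset.Icc (1 : ℤ) (r - 1), (k * p / r) ^ 2 : ℤ) : ℚ) := by
    intro r hr
    rw [Int.cast_sum]
    refine Finset.sum_congr rfl fun k hk => ?_
    rw [floor_cast_div _ _ hr]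
    push_cast
    ring
  have hkey := key_sum p q hpq hq hqp
  have h6 := six_sum_sq (p - 2) (by omega)
  have hcast : (6 : ℚ) * (((∑ k ∈ Finset.Icc (1 : ℤ) (q - 1), (k * p / q) ^ 2 : ℤ) : ℚ)
      + ((∑ k ∈ Finset.Icc (1 : ℤ) (p - q - 1), (k * p / (p - q)) ^ 2 : ℤ) : ℚ))
      = ((p : ℚ) - 2) * ((p : ℚ) - 1) * (2 * (p : ℚ) - 3) := by
    have : (6 : ℤ) * ((∑ k ∈ Finset.Icc (1 : ℤ) (q - 1), (k * p / q) ^ 2)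
        + (∑ k ∈ Finset.Icc (1 : ℤ) (p - q - 1), (k * p / (p - q)) ^ 2))
        = (p - 2) * (p - 2 + 1) * (2 * (p - 2) + 1) := by rw [hkey]; exact h6
    have := congrArg (fun z : ℤ => (z : ℚ)) this
    push_cast at this
    push_cast
    linarith
  unfold etaInv
  rw [hsum q hq, hsum (p - q) hq']
  have hq2 : ((p : ℤ) - q - 1) = (p - q) - 1 := by ring
  push_cast at hcast ⊢
  field_simp
  linear_combination (-1 : ℚ) * hcast
end

section
/- Let a and b be integers with a ≤ −2 and b ≤ −2 such that the rational-number inequality 6 − 2/(ab − 1) ≥ −ab(a + b)/(ab − 1) holds. Then a = −2 and b = −2. -/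
/-- If `a ≤ -2` and `b ≤ -2` are integers satisfying the rational inequality
`6 − 2/(ab − 1) ≥ −ab(a + b)/(ab − 1)`, then `a = −2` and `b = −2`. -/
theorem hitchin_thorpe_neg_case (a b : ℤ) (ha : a ≤ -2) (hb : b ≤ -2)
    (h : 6 - 2 / ((a : ℚ) * b - 1) ≥ -((a : ℚ) * b) * ((a : ℚ) + b) / ((a : ℚ) * b - 1)) :
    a = -2 ∧ b = -2 := by
  have hab : (4:ℤ) ≤ a * b := by nlinarith
  have hd : (0:ℚ) < (a:ℚ) * b - 1 := by
    have : (4:ℚ) ≤ (a:ℚ) * b := by exact_mod_cast hab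
    linarith
  rw [ge_iff_le, div_le_iff₀ hd] at h
  have h3 : (2 / ((a:ℚ)*b-1)) * ((a:ℚ)*b-1) = 2 := div_mul_cancel₀ _ hd.ne'
  have key : -((a:ℚ)*b) * ((a:ℚ)+b) ≤ 6*((a:ℚ)*b-1) - 2 := by nlinarith
  have keyZ : -(a*b) * (a+b) ≤ 6*(a*b-1) - 2 := by exact_mod_cast key
  constructor <;> nlinarith [mul_nonneg (by linarith : (0:ℤ) ≤ -a-2) (by linarith : (0:ℤ) ≤ -b-2), mul_pos (by linarith : (0:ℤ) < -a) (by linarith : (0:ℤ) < -b)]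
end

section
/- For every integer b with b ≤ −2, the rational-number inequality 2·(3 − 1/(−b − 1)) ≥ 3·|−2 + (b + 2)(b + 3)/(3(b + 1))| FAILS; that is, 2·(3 − 1/(−b − 1)) < 3·|−2 + (b + 2)(b + 3)/(3(b + 1))|. -/
/-- For every integer `b ≤ -2`, the Hitchin–Thorpe inequality
`2(3 − 1/(−b − 1)) ≥ 3|−2 + (b+2)(b+3)/(3(b+1))|` fails. -/
theorem hitchin_thorpe_fails_a_eq_neg_one (b : ℤ) (hb : b ≤ -2) :
    2 * (3 - 1 / (-(b : ℚ) - 1)) <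
      3 * |(-2 : ℚ) + ((b : ℚ) + 2) * ((b : ℚ) + 3) / (3 * ((b : ℚ) + 1))| := by
  have hb' : (b : ℚ) ≤ -2 := by exact_mod_cast hb
  have hd : (b : ℚ) + 1 < 0 := by linarith
  have hne : 3 * ((b : ℚ) + 1) ≠ 0 := by
    intro h; nlinarith
  have key : (-2 : ℚ) + ((b : ℚ) + 2) * ((b : ℚ) + 3) / (3 * ((b : ℚ) + 1))
      = (b : ℚ) * ((b : ℚ) - 1) / (3 * ((b : ℚ) + 1)) := by
    field_simp [hd.ne]; ring
  have hnum : (0 : ℚ) < (b : ℚ) * ((b : ℚ) - 1) := by nlinarith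
  have hneg : (b : ℚ) * ((b : ℚ) - 1) / (3 * ((b : ℚ) + 1)) < 0 :=
    div_neg_of_pos_of_neg hnum (by linarith)
  rw [key, abs_of_neg hneg]
  have hpos : (0 : ℚ) < -(b : ℚ) - 1 := by linarith
  have e1 : 1 / (-(b : ℚ) - 1) * (-(b : ℚ) - 1) = 1 := by
    field_simp
  have e2 : (b : ℚ) * ((b : ℚ) - 1) / (3 * ((b : ℚ) + 1)) * (3 * ((b : ℚ) + 1))
      = (b : ℚ) * ((b : ℚ) - 1) := by
    field_simp [hd.ne]
  nlinarith [mul_pos hpos hpos, sq_nonneg ((b : ℚ) + 1),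
    mul_pos (mul_pos hpos hpos) hpos]
end

section
/- Let a and b be integers with a ≤ −1 and b ≥ 1. If the rational-number inequality 2·(3 − 1/(1 − ab)) ≥ 3·|−ab(a + b)/(3(1 − ab))| holds, then |a + b| ≤ 6. -/
/-- For integers `a ≤ -1` and `b ≥ 1`, if the Hitchin–Thorpe inequality
`2(3 − 1/(1 − ab)) ≥ 3|−ab(a+b)/(3(1−ab))|` holds, then `|a + b| ≤ 6`. -/
theorem hitchin_thorpe_pos_case (a b : ℤ) (ha : a ≤ -1) (hb : 1 ≤ b)
    (h : 2 * (3 - 1 / (1 - (a : ℚ) * b)) ≥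
      3 * |(-((a : ℚ) * b) * ((a : ℚ) + b)) / (3 * (1 - (a : ℚ) * b))|) :
    |a + b| ≤ 6 := by
  have habZ : a * b ≤ -1 := by nlinarith
  have habQ : (a : ℚ) * b ≤ -1 := by exact_mod_cast habZ
  have hp : (0 : ℚ) < 1 - (a : ℚ) * b := by linarith
  have hp3 : (0 : ℚ) < 3 * (1 - (a : ℚ) * b) := by linarith
  rw [abs_div, abs_of_pos hp3, ge_iff_le] at h
  have e : 3 * (|(-((a : ℚ) * b) * ((a : ℚ) + b))| / (3 * (1 - (a : ℚ) * b)))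
      = |(-((a : ℚ) * b) * ((a : ℚ) + b))| / (1 - (a : ℚ) * b) := by
    field_simp
  rw [e, div_le_iff₀ hp] at h
  have h2 : |(-((a : ℚ) * b) * ((a : ℚ) + b))| ≤ 6 * (1 - (a : ℚ) * b) - 2 := by
    have e2 : (2 * (3 - 1 / (1 - (a : ℚ) * b))) * (1 - (a : ℚ) * b)
        = 6 * (1 - (a : ℚ) * b) - 2 := by
      field_simp
      ring
    linarith [h, e2.ge, e2.le]
  have keyZ : |(-(a * b) * (a + b))| ≤ 6 * (1 - a * b) - 2 := by
    have : ((|(-(a * b) * (a + b))| : ℤ) : ℚ) ≤ ((6 * (1 - a * b) - 2 : ℤ) : ℚ) := by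
      push_cast
      exact h2
    exact_mod_cast this
  by_contra hc
  push_neg at hc
  have h7 : 7 ≤ |a + b| := hc
  rcases abs_cases (a + b) with ⟨he, _⟩ | ⟨he, _⟩ <;>
  rcases abs_cases (-(a * b) * (a + b)) with ⟨he2, _⟩ | ⟨he2, _⟩ <;>
  · rw [he] at h7
    rw [he2] at keyZ
    nlinarith [mul_pos (by linarith : (0:ℤ) < -a) (by linarith : (0:ℤ) < b), h7, keyZ,
      mul_le_mul_of_nonneg_left h7 (by nlinarith : (0:ℤ) ≤ -(a*b))]
end

section
/- Let a and b be integers such that p := |1 − ab| > 1, let q be the unique integer with 0 ≤ q < p and q ≡ b·sgn(1 − ab) (mod p), and let τ be the number of positive eigenvalues minus the number of negative eigenvalues of the real symmetric matrix [[a, 1], [1, b]]. If the rational-number inequality 2·(3 − 1/p) ≥ 3·|τ + η(p, q)| holds, then either (a, b) = (2, 2), or (a, b) = (−2, −2), or (ab < 0 and |a + b| ≤ 6). -/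
open Finset

private lemma myIco_top {a n : ℤ} (h : a ≤ n) :
    Finset.Ico a (n+1) = insert n (Finset.Ico a n) := by
  ext x; simp only [Finset.mem_Ico, Finset.mem_insert]; omega

private lemma sum_Ico_top (f : ℤ → ℤ) {a n : ℤ} (h : a ≤ n) :
    ∑ k ∈ Finset.Ico a (n+1), f k = (∑ k ∈ Finset.Ico a n, f k) + f n := by
  rw [myIco_top h, Finset.sum_insert (by simp)]; ring

private lemma sqSum (c d : ℤ) : ∀ n : ℤ, 0 ≤ n →
    6 * ∑ k ∈ Finset.Ico (0:ℤ) n, (c*k+d)^2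
      = 2*c^2*n^3 - 3*c^2*n^2 + c^2*n + 6*c*d*n^2 - 6*c*d*n + 6*d^2*n := by
  refine Int.le_induction ?_ ?_
  · norm_num
  · intro n hn ih
    rw [sum_Ico_top (fun k => (c*k+d)^2) hn, mul_add, ih]; ring

private lemma ediv_eq_of {n d v r : ℤ} (hd : 0 < d) (h : n = d*v + r)
    (h0 : 0 ≤ r) (h1 : r < d) : n / d = v := by
  have h2 : v ≤ n/d := (Int.le_ediv_iff_mul_le hd).2 (by nlinarith)
  have h3 : n/d < v+1 := (Int.ediv_lt_iff_lt_mul hd).2 (by nlinarith)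
  omega

private lemma blockSum (a c : ℤ) (ha : 2 ≤ a) : ∀ m : ℤ, 0 ≤ m →
    6 * ∑ k ∈ Finset.Ico (0:ℤ) (m*(a-1)), (k + c + k/(a-1))^2
      = -6*m + 12*c*m - 6*c^2*m + 7*a*m + 6*a*m^2 - 12*a*c*m - 6*a*c*m^2 + 6*a*c^2*m
        - a^2*m - 6*a^2*m^2 - 2*a^2*m^3 + 6*a^2*c*m^2 + 2*a^3*m^3 := by
  have ha1 : (0:ℤ) < a - 1 := by omega
  refine Int.le_induction ?_ ?_
  · rw [zero_mul, Finset.Ico_self, Finset.sum_empty]; ring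
  · intro m hm ih
    have h0 : (0:ℤ) ≤ m*(a-1) := mul_nonneg hm ha1.le
    have h1 : m*(a-1) ≤ (m+1)*(a-1) := by nlinarith
    have hsplit : (∑ k ∈ Finset.Ico (0:ℤ) (m*(a-1)), (k + c + k/(a-1))^2)
        + ∑ k ∈ Finset.Ico (m*(a-1)) ((m+1)*(a-1)), (k + c + k/(a-1))^2
        = ∑ k ∈ Finset.Ico (0:ℤ) ((m+1)*(a-1)), (k + c + k/(a-1))^2 := by
      rw [← Finset.sum_union (Finset.Ico_disjoint_Ico_consecutive _ _ _),
          Finset.Ico_union_Ico_eq_Ico h0 h1]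
    have hblock : ∑ k ∈ Finset.Ico (m*(a-1)) ((m+1)*(a-1)), (k + c + k/(a-1))^2
        = ∑ k ∈ Finset.Ico (m*(a-1)) ((m+1)*(a-1)), ((1:ℤ)*k + (c+m))^2 := by
      refine Finset.sum_congr rfl fun k hk => ?_
      simp only [Finset.mem_Ico] at hk
      have h2 : m ≤ k/(a-1) := (Int.le_ediv_iff_mul_le ha1).2 hk.1
      have h3 : k/(a-1) < m+1 := (Int.ediv_lt_iff_lt_mul ha1).2 (by nlinarith [hk.2])
      have hdiv : k/(a-1) = m := by omega
      rw [hdiv]; ring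
    have hsplit2 : (∑ k ∈ Finset.Ico (0:ℤ) (m*(a-1)), ((1:ℤ)*k + (c+m))^2)
        + ∑ k ∈ Finset.Ico (m*(a-1)) ((m+1)*(a-1)), ((1:ℤ)*k + (c+m))^2
        = ∑ k ∈ Finset.Ico (0:ℤ) ((m+1)*(a-1)), ((1:ℤ)*k + (c+m))^2 := by
      rw [← Finset.sum_union (Finset.Ico_disjoint_Ico_consecutive _ _ _),
          Finset.Ico_union_Ico_eq_Ico h0 h1]
    have q1 := sqSum 1 (c+m) ((m+1)*(a-1)) (le_trans h0 h1)
    have q2 := sqSum 1 (c+m) (m*(a-1)) h0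
    linear_combination ih + q1 - q2 + 6*hblock + 6*hsplit2 - 6*hsplit

private lemma floor_int_div (x y : ℤ) (hy : 0 < y) : ⌊((x:ℤ):ℚ)/((y:ℤ):ℚ)⌋ = x / y := by
  have h1 : ((y.toNat : ℕ) : ℚ) = ((y:ℤ) : ℚ) := by
    rw [← Int.cast_natCast]; exact congrArg _ (Int.toNat_of_nonneg hy.le)
  rw [← h1, Rat.floor_intCast_div_natCast, Int.toNat_of_nonneg hy.le]

private lemma etaInv_eq (p q : ℤ) (hq : 0 < q) :
    etaInv p q = (((p - 1) * (2*p*q - 3*p - q + 3) : ℤ) : ℚ) / (3*(p:ℚ))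
      - 2/(p:ℚ) * ((∑ k ∈ Finset.Icc (1:ℤ) (q-1), ((k*p)/q)^2 : ℤ) : ℚ) := by
  unfold etaInv
  have hs : ∀ k ∈ Finset.Icc (1:ℤ) (q-1),
      ((⌊((k * p : ℤ) : ℚ) / ((q : ℤ) : ℚ)⌋ : ℚ))^2 = ((((k*p)/q : ℤ) : ℚ))^2 :=
    fun k _ => by rw [floor_int_div (k*p) q hq]
  rw [Finset.sum_congr rfl hs]
  push_cast
  ring

private lemma sumIcc_sq (c : ℤ) (n : ℤ) (hn : 0 < n) :
    (∑ k ∈ Finset.Icc (1:ℤ) (n-1), (c*k)^2) * 6 = 2*c^2*n^3 - 3*c^2*n^2 + c^2*n := by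
  have hu : Finset.Ico (0:ℤ) n = insert 0 (Finset.Icc (1:ℤ) (n-1)) := by
    ext x; simp only [Finset.mem_Ico, Finset.mem_insert, Finset.mem_Icc]; omega
  have h := sqSum c 0 n hn.le
  rw [hu, Finset.sum_insert (by simp)] at h
  have hb : ∑ k ∈ Finset.Icc (1:ℤ) (n-1), (c*k+0)^2
      = ∑ k ∈ Finset.Icc (1:ℤ) (n-1), (c*k)^2 :=
    Finset.sum_congr rfl fun k _ => by ring
  rw [hb] at h
  linear_combination h

private lemma sumIcc_sq1 (c : ℤ) (n : ℤ) (hn : 0 < n) :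
    (∑ k ∈ Finset.Icc (1:ℤ) (n-1), (c*k-1)^2) * 6
      = 2*c^2*n^3 - 3*c^2*n^2 + c^2*n - 6*c*n^2 + 6*c*n + 6*n - 6 := by
  have hu : Finset.Ico (0:ℤ) n = insert 0 (Finset.Icc (1:ℤ) (n-1)) := by
    ext x; simp only [Finset.mem_Ico, Finset.mem_insert, Finset.mem_Icc]; omega
  have h := sqSum c (-1) n hn.le
  rw [hu, Finset.sum_insert (by simp)] at h
  have hb : ∑ k ∈ Finset.Icc (1:ℤ) (n-1), (c*k+(-1))^2
      = ∑ k ∈ Finset.Icc (1:ℤ) (n-1), (c*k-1)^2 :=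
    Finset.sum_congr rfl fun k _ => by ring
  rw [hb] at h
  linear_combination h


private lemma div_finisher {N P S U V T : ℚ} (hp : P ≠ 0) (hV : V ≠ 0)
    (h : 6*T*P*V + 2*N*V - 2*S*V = 2*U*P) :
    T + (N/(3*P) - 2/P * (S/6)) = U/(3*V) := by
  field_simp
  linear_combination 3*h

private lemma eta_key (a b p q t : ℤ) (hp : p = |1 - a*b|) (hp1 : 1 < p)
    (hq0 : 0 ≤ q) (hqp : q < p)
    (hqmod : q % p = (b * Int.sign (1 - a*b)) % p)
    (ht : t = if a*b < 0 then 0 else if 0 < a then 2 else -2) :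
    (t:ℚ) + etaInv p q = (((a+b)*(a*b) : ℤ) : ℚ) / (3 * ((a*b - 1 : ℤ) : ℚ)) := by
  have hq : q = q % p := (Int.emod_eq_of_lt hq0 hqp).symm
  have hcase : a*b ≤ -1 ∨ 3 ≤ a*b := by
    rcases abs_cases (1 - a*b) with ⟨he, _⟩ | ⟨he, _⟩ <;> omega
  rcases hcase with hneg | hpos
  · -- a*b < 0
    have hpv : p = 1 - a*b := by rw [hp, abs_of_pos (by omega : (0:ℤ) < 1 - a*b)]
    have hsign : Int.sign (1 - a*b) = 1 := Int.sign_eq_one_of_pos (by omega)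
    have hqmod' : q % p = b % p := by rwa [hsign, mul_one] at hqmod
    have htv : t = 0 := by rw [ht, if_pos (by omega : a*b < 0)]
    have hane : a ≠ 0 := by rintro rfl; simp at hneg
    have hbne : b ≠ 0 := by rintro rfl; simp at hneg
    rcases lt_or_ge 0 a with ha | ha
    · -- C1 : 0 < a, b < 0
      have hb : b < 0 := by
        rcases lt_or_ge b 0 with h | h
        · exact h
        · nlinarith
      have hqv : q = 1 + b - a*b := by
        have h1 : b = (1 + b - a*b) + p*(-1) := by rw [hpv]; ring
        have h2 : (0:ℤ) ≤ 1 + b - a*b := by nlinarith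
        have h3 : 1 + b - a*b < p := by omega
        have hbp : b % p = 1 + b - a*b := by
          conv_lhs => rw [h1]
          rw [Int.add_mul_emod_self_left, Int.emod_eq_of_lt h2 h3]
        rw [hq, hqmod', hbp]
      have hq1 : q - 1 = (-b)*(a-1) := by rw [hqv]; ring
      have hqpos : 0 < q := by nlinarith
      have hSZ6 : (∑ k ∈ Finset.Icc (1:ℤ) (q-1), ((k*p)/q)^2) * 6
          = -6*(-b) + 12*1*(-b) - 6*1^2*(-b) + 7*a*(-b) + 6*a*(-b)^2 - 12*a*1*(-b)
            - 6*a*1*(-b)^2 + 6*a*1^2*(-b) - a^2*(-b) - 6*a^2*(-b)^2 - 2*a^2*(-b)^3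
            + 6*a^2*1*(-b)^2 + 2*a^3*(-b)^3 := by
        rcases eq_or_lt_of_le (by omega : 1 ≤ a) with h1 | ha2
        · -- a = 1 : q = 1, empty sum
          have hq1' : q = 1 := by rw [hqv, ← h1]; ring
          rw [hq1']
          rw [show (1:ℤ) - 1 = 0 from rfl, Finset.Icc_eq_empty (by norm_num),
            Finset.sum_empty]
          rw [← h1]; ring
        · -- 2 ≤ a
          have ha1 : (0:ℤ) < a - 1 := by omega
          have hper : ∀ k ∈ Finset.Icc (1:ℤ) (q-1), (k*p)/q = k + (k-1)/(a-1) := by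
            intro k hk
            simp only [Finset.mem_Icc] at hk
            have hdr := Int.mul_ediv_add_emod (k-1) (a-1)
            have hr0 : 0 ≤ (k-1)%(a-1) := Int.emod_nonneg _ (by omega)
            have hr1 : (k-1)%(a-1) < a-1 := Int.emod_lt_of_pos _ ha1
            have hkub : k - 1 < (-b)*(a-1) := by
              have := hk.2; omega
            have ht1 : (k-1)/(a-1) < -b := (Int.ediv_lt_iff_lt_mul ha1).2 (by linarith)
            have ht0 : 0 ≤ (k-1)/(a-1) := Int.ediv_nonneg (by omega) (by omega)
            refine ediv_eq_of (r := ((k-1)%(a-1)+1)*(-b) - (k-1)/(a-1)) hqpos ?_ ?_ ?_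
            · rw [hpv, hqv]
              linear_combination b * hdr
            · nlinarith [mul_le_mul_of_nonneg_right
                (show (1:ℤ) ≤ (k-1)%(a-1)+1 by omega) (show (0:ℤ) ≤ -b by omega)]
            · have h5 : ((k-1)%(a-1)+1)*(-b) ≤ (a-1)*(-b) :=
                mul_le_mul_of_nonneg_right (by omega) (by omega)
              rw [hqv]; nlinarith
          have hsum1 : ∑ k ∈ Finset.Icc (1:ℤ) (q-1), ((k*p)/q)^2
              = ∑ k ∈ Finset.Icc (1:ℤ) (q-1), (k + (k-1)/(a-1))^2 :=
            Finset.sum_congr rfl fun k hk => by rw [hper k hk]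
          have hIcc : Finset.Icc (1:ℤ) (q-1)
              = Finset.map (addLeftEmbedding (1:ℤ)) (Finset.Ico (0:ℤ) (q-1)) := by
            rw [Finset.map_add_left_Ico]
            ext x; simp only [Finset.mem_Icc, Finset.mem_Ico]; omega
          have hsum2 : ∑ k ∈ Finset.Icc (1:ℤ) (q-1), (k + (k-1)/(a-1))^2
              = ∑ j ∈ Finset.Ico (0:ℤ) (q-1), (j + 1 + j/(a-1))^2 := by
            rw [hIcc, Finset.sum_map]
            refine Finset.sum_congr rfl fun j _ => ?_
            simp only [addLeftEmbedding_apply]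
            rw [show (1:ℤ) + j - 1 = j from by ring]
            ring
          have hbs := blockSum a 1 (by omega) (-b) (by omega)
          rw [hsum1, hsum2, hq1]
          linear_combination hbs
      -- finisher
      have hqposZ : (0:ℤ) < 1 - a*b := by omega
      have hSQ : ((∑ k ∈ Finset.Icc (1:ℤ) (q-1), ((k*p)/q)^2 : ℤ) : ℚ)
          = ((-6*(-b) + 12*1*(-b) - 6*1^2*(-b) + 7*a*(-b) + 6*a*(-b)^2 - 12*a*1*(-b)
            - 6*a*1*(-b)^2 + 6*a*1^2*(-b) - a^2*(-b) - 6*a^2*(-b)^2 - 2*a^2*(-b)^3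
            + 6*a^2*1*(-b)^2 + 2*a^3*(-b)^3 : ℤ) : ℚ) / 6 := by
        rw [eq_div_iff (by norm_num : (6:ℚ) ≠ 0)]
        exact_mod_cast hSZ6
      rw [etaInv_eq p q hqpos, hSQ]
      refine div_finisher (Int.cast_ne_zero.2 (show p ≠ 0 by omega))
        (Int.cast_ne_zero.2 (show a*b - 1 ≠ 0 by intro hcon; linarith)) ?_
      rw [htv, hpv, hqv]
      push_cast
      ring
    · -- C2 : a < 0, 0 < b
      have ha' : a ≤ -1 := by omega
      have hbpos : 0 < b := by
        rcases lt_or_ge 0 b with h | h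
        · exact h
        · nlinarith
      have hqv : q = b := by
        have h2 : (0:ℤ) ≤ b := hbpos.le
        have h3 : b < p := by nlinarith
        rw [hq, hqmod', Int.emod_eq_of_lt h2 h3]
      have hqpos : 0 < q := by omega
      have hper : ∀ k ∈ Finset.Icc (1:ℤ) (q-1), (k*p)/q = (-a)*k := by
        intro k hk
        simp only [Finset.mem_Icc] at hk
        refine ediv_eq_of (r := k) hqpos ?_ (by omega) (by omega)
        rw [hpv, hqv]; ring
      have hsum1 : ∑ k ∈ Finset.Icc (1:ℤ) (q-1), ((k*p)/q)^2
          = ∑ k ∈ Finset.Icc (1:ℤ) (q-1), ((-a)*k)^2 :=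
        Finset.sum_congr rfl fun k hk => by rw [hper k hk]
      have hSZ6 : (∑ k ∈ Finset.Icc (1:ℤ) (q-1), ((k*p)/q)^2) * 6
          = 2*(-a)^2*b^3 - 3*(-a)^2*b^2 + (-a)^2*b := by
        rw [hsum1, hqv]
        exact sumIcc_sq (-a) b hbpos
      have hSQ : ((∑ k ∈ Finset.Icc (1:ℤ) (q-1), ((k*p)/q)^2 : ℤ) : ℚ)
          = ((2*(-a)^2*b^3 - 3*(-a)^2*b^2 + (-a)^2*b : ℤ) : ℚ) / 6 := by
        rw [eq_div_iff (by norm_num : (6:ℚ) ≠ 0)]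
        exact_mod_cast hSZ6
      rw [etaInv_eq p q hqpos, hSQ]
      refine div_finisher (Int.cast_ne_zero.2 (show p ≠ 0 by omega))
        (Int.cast_ne_zero.2 (show a*b - 1 ≠ 0 by intro hcon; linarith)) ?_
      rw [htv, hpv, hqv]
      push_cast
      ring
  · -- 3 ≤ a*b
    have hpv : p = a*b - 1 := by
      rw [hp, abs_of_neg (show (1:ℤ) - a*b < 0 by omega)]; ring
    have hsign : Int.sign (1 - a*b) = -1 := Int.sign_eq_neg_one_of_neg (by omega)
    have hqmod' : q % p = (-b) % p := by
      rw [hsign] at hqmod; rwa [mul_neg_one] at hqmod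
    rcases lt_or_ge 0 a with ha | ha
    · -- a ≥ 1, b ≥ 1
      have hbpos : 0 < b := by
        rcases lt_or_ge 0 b with h | h
        · exact h
        · nlinarith
      have htv : t = 2 := by rw [ht, if_neg (by omega), if_pos ha]
      rcases eq_or_lt_of_le (show 1 ≤ a by omega) with h1 | ha2
      · -- C3a : a = 1, b ≥ 3
        have ha1 : a = 1 := h1.symm
        subst ha1
        have hb3 : 3 ≤ b := by omega
        have hqv : q = b - 2 := by
          have h1' : (-b : ℤ) = (b-2) + p*(-2) := by rw [hpv]; ring
          have h2 : (0:ℤ) ≤ b - 2 := by omega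
          have h3 : b - 2 < p := by omega
          have hbp : (-b) % p = b - 2 := by
            conv_lhs => rw [h1']
            rw [Int.add_mul_emod_self_left, Int.emod_eq_of_lt h2 h3]
          rw [hq, hqmod', hbp]
        have hqpos : 0 < q := by omega
        have hper : ∀ k ∈ Finset.Icc (1:ℤ) (q-1), (k*p)/q = 1*k := by
          intro k hk
          simp only [Finset.mem_Icc] at hk
          refine ediv_eq_of (r := k) hqpos ?_ (by omega) (by omega)
          rw [hpv, hqv]; ring
        have hsum1 : ∑ k ∈ Finset.Icc (1:ℤ) (q-1), ((k*p)/q)^2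
            = ∑ k ∈ Finset.Icc (1:ℤ) (q-1), ((1:ℤ)*k)^2 :=
          Finset.sum_congr rfl fun k hk => by rw [hper k hk]
        have hSZ6 : (∑ k ∈ Finset.Icc (1:ℤ) (q-1), ((k*p)/q)^2) * 6
            = 2*1^2*(b-2)^3 - 3*1^2*(b-2)^2 + 1^2*(b-2) := by
          rw [hsum1, hqv]
          exact sumIcc_sq 1 (b-2) (by omega)
        have hSQ : ((∑ k ∈ Finset.Icc (1:ℤ) (q-1), ((k*p)/q)^2 : ℤ) : ℚ)
            = ((2*1^2*(b-2)^3 - 3*1^2*(b-2)^2 + 1^2*(b-2) : ℤ) : ℚ) / 6 := by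
          rw [eq_div_iff (by norm_num : (6:ℚ) ≠ 0)]
          exact_mod_cast hSZ6
        rw [etaInv_eq p q hqpos, hSQ]
        refine div_finisher (Int.cast_ne_zero.2 (show p ≠ 0 by omega))
          (Int.cast_ne_zero.2 (show 1*b - 1 ≠ 0 by intro hcon; linarith)) ?_
        rw [htv, hpv, hqv]
        push_cast
        ring
      · -- C3b : 2 ≤ a, b ≥ 1
        have ha1 : (0:ℤ) < a - 1 := by omega
        have hqv : q = a*b - 1 - b := by
          have h1' : (-b : ℤ) = (a*b - 1 - b) + p*(-1) := by rw [hpv]; ring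
          have h2 : (0:ℤ) ≤ a*b - 1 - b := by nlinarith
          have h3 : a*b - 1 - b < p := by
            have := hpv; omega
          have hbp : (-b) % p = a*b - 1 - b := by
            conv_lhs => rw [h1']
            rw [Int.add_mul_emod_self_left, Int.emod_eq_of_lt h2 h3]
          rw [hq, hqmod', hbp]
        have hq1 : b*(a-1) = q + 1 := by rw [hqv]; ring
        have hqge1 : 1 ≤ q := by
          rcases lt_or_ge b 2 with hb1 | hb2
          · have hb1' : b = 1 := by omega
            rw [hb1'] at hqv
            have ha3 : 3 ≤ a := by
              rw [hb1'] at hpos; omega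
            omega
          · nlinarith
        have hqpos : 0 < q := by omega
        have hper : ∀ k ∈ Finset.Icc (1:ℤ) (q-1), (k*p)/q = k + k/(a-1) := by
          intro k hk
          simp only [Finset.mem_Icc] at hk
          have hdr := Int.mul_ediv_add_emod k (a-1)
          have hr0 : 0 ≤ k%(a-1) := Int.emod_nonneg _ (by omega)
          have hr1 : k%(a-1) < a-1 := Int.emod_lt_of_pos _ ha1
          have ht0 : 0 ≤ k/(a-1) := Int.ediv_nonneg (by omega) (by omega)
          have htb : k/(a-1) ≤ b - 1 := by
            have h4 : k/(a-1) < b := (Int.ediv_lt_iff_lt_mul ha1).2 (by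
              linarith [hq1, hk.2])
            omega
          refine ediv_eq_of (r := k/(a-1) + (k%(a-1))*b) hqpos ?_ ?_ ?_
          · rw [hpv, hqv]
            linear_combination (-b) * hdr
          · have := mul_nonneg hr0 hbpos.le
            linarith
          · -- k/(a-1) + (k%(a-1))*b < q
            rcases lt_or_ge (k%(a-1)) (a-2) with hr | hr
            · have h5 : (k%(a-1))*b ≤ (a-3)*b :=
                mul_le_mul_of_nonneg_right (by omega) (by omega)
              have h5' : (a-3)*b = a*b - 3*b := by ring
              rw [hqv]; linarith
            · have hreq : k%(a-1) = a - 2 := by omega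
              have h6 : (k/(a-1))*(a-1) + (a-2) ≤ q - 1 := by
                rw [← hreq]
                linarith [hdr, hk.2]
              have h7 : k/(a-1) ≤ b - 2 := by
                by_contra hc
                push_neg at hc
                have h8 : (b-1)*(a-1) ≤ (k/(a-1))*(a-1) :=
                  mul_le_mul_of_nonneg_right (by omega) (by omega)
                have e1 : (b-1)*(a-1) = b*(a-1) - (a-1) := by ring
                linarith [hq1]
              have h8 : (k%(a-1))*b ≤ (a-2)*b :=
                mul_le_mul_of_nonneg_right (by omega) (by omega)
              have h8' : (a-2)*b = a*b - 2*b := by ring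
              rw [hqv]; linarith
        have hsum1 : ∑ k ∈ Finset.Icc (1:ℤ) (q-1), ((k*p)/q)^2
            = ∑ k ∈ Finset.Icc (1:ℤ) (q-1), (k + 0 + k/(a-1))^2 :=
          Finset.sum_congr rfl fun k hk => by rw [hper k hk]; ring
        have hbs := blockSum a 0 (by omega) b (by omega)
        rw [hq1] at hbs
        have hdec : Finset.Ico (0:ℤ) (q+1) = insert 0 (insert q (Finset.Icc (1:ℤ) (q-1))) := by
          ext x
          simp only [Finset.mem_Ico, Finset.mem_insert, Finset.mem_Icc]
          omega
        rw [hdec, Finset.sum_insert (by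
            simp only [Finset.mem_insert, Finset.mem_Icc]
            push_neg
            omega),
          Finset.sum_insert (by
            simp only [Finset.mem_Icc]
            push_neg
            omega)] at hbs
        have hdivq : q/(a-1) = b - 1 := by
          refine ediv_eq_of (r := a-2) ha1 ?_ (by omega) (by omega)
          rw [hqv]; ring
        rw [hdivq] at hbs
        have hz : ((0:ℤ) + 0 + 0/(a-1))^2 = 0 := by
          rw [Int.zero_ediv]; ring
        rw [hz] at hbs
        have hSZ6 : (∑ k ∈ Finset.Icc (1:ℤ) (q-1), ((k*p)/q)^2) * 6
            = (-6*b + 12*0*b - 6*0^2*b + 7*a*b + 6*a*b^2 - 12*a*0*b - 6*a*0*b^2 + 6*a*0^2*b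
              - a^2*b - 6*a^2*b^2 - 2*a^2*b^3 + 6*a^2*0*b^2 + 2*a^3*b^3) - 6*(a*b-2)^2 := by
          rw [hsum1]
          linear_combination hbs - 6*(a*b + b + q - 3) * hqv
        have hSQ : ((∑ k ∈ Finset.Icc (1:ℤ) (q-1), ((k*p)/q)^2 : ℤ) : ℚ)
            = (((-6*b + 12*0*b - 6*0^2*b + 7*a*b + 6*a*b^2 - 12*a*0*b - 6*a*0*b^2 + 6*a*0^2*b
              - a^2*b - 6*a^2*b^2 - 2*a^2*b^3 + 6*a^2*0*b^2 + 2*a^3*b^3) - 6*(a*b-2)^2 : ℤ) : ℚ) / 6 := by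
          rw [eq_div_iff (by norm_num : (6:ℚ) ≠ 0)]
          exact_mod_cast hSZ6
        rw [etaInv_eq p q hqpos, hSQ]
        refine div_finisher (Int.cast_ne_zero.2 (show p ≠ 0 by omega))
          (Int.cast_ne_zero.2 (show a*b - 1 ≠ 0 by intro hcon; linarith)) ?_
        rw [htv, hpv, hqv]
        push_cast
        ring
    · -- a ≤ -1, b ≤ -1
      have ha1 : a ≤ -1 := by
        rcases lt_or_ge a 0 with h | h
        · omega
        · interval_cases a
          · omega
      have hb1 : b ≤ -1 := by
        rcases lt_or_ge b 0 with h | h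
        · omega
        · nlinarith
      have htv : t = -2 := by rw [ht, if_neg (by omega), if_neg (by omega)]
      have hempty : ∀ (_ : a = -1 ∨ b = -1) (hqv : q = 1), (t:ℚ) + etaInv p q
          = (((a+b)*(a*b) : ℤ) : ℚ) / (3 * ((a*b - 1 : ℤ) : ℚ)) := by
        intro har hqv
        have hqpos : 0 < q := by omega
        have hSZ6 : (∑ k ∈ Finset.Icc (1:ℤ) (q-1), ((k*p)/q)^2) * 6 = 0 := by
          rw [hqv, show (1:ℤ)-1 = 0 from rfl, Finset.Icc_eq_empty (by norm_num),
            Finset.sum_empty, zero_mul]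
        have hSQ : ((∑ k ∈ Finset.Icc (1:ℤ) (q-1), ((k*p)/q)^2 : ℤ) : ℚ)
            = ((0 : ℤ) : ℚ) / 6 := by
          rw [eq_div_iff (by norm_num : (6:ℚ) ≠ 0)]
          exact_mod_cast hSZ6
        rw [etaInv_eq p q hqpos, hSQ]
        refine div_finisher (Int.cast_ne_zero.2 (show p ≠ 0 by omega))
          (Int.cast_ne_zero.2 (show a*b - 1 ≠ 0 by intro hcon; linarith)) ?_
        rw [htv, hpv, hqv]
        rcases har with h | h <;> subst h <;> push_cast <;> ring
      rcases eq_or_lt_of_le ha1 with hae | ha2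
      · -- a = -1, so b ≤ -3
        subst hae
        have hb3 : b ≤ -3 := by omega
        refine hempty (Or.inl rfl) ?_
        have h1' : (-b : ℤ) = 1 + p*1 := by rw [hpv]; ring
        have hbp : (-b) % p = 1 := by
          conv_lhs => rw [h1']
          rw [Int.add_mul_emod_self_left, Int.emod_eq_of_lt (by omega) (by omega)]
        rw [hq, hqmod', hbp]
      · rcases eq_or_lt_of_le hb1 with hbe | hb2
        · -- b = -1, a ≤ -3
          subst hbe
          refine hempty (Or.inr rfl) ?_
          have hbp : (-(-1) : ℤ) % p = 1 := by
            norm_num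
            exact Int.emod_eq_of_lt (by omega) (by omega)
          rw [hq, hqmod', hbp]
        · -- C4c : a ≤ -2, b ≤ -2
          have ha2' : a ≤ -2 := by omega
          have hb2' : b ≤ -2 := by omega
          have hqv : q = -b := by
            have h3 : -b < p := by
              nlinarith [mul_le_mul_of_nonneg_left (show (1:ℤ) ≤ -a-1 by omega)
                (show (0:ℤ) ≤ -b by omega)]
            rw [hq, hqmod', Int.emod_eq_of_lt (by omega) h3]
          have hqpos : 0 < q := by omega
          have hper : ∀ k ∈ Finset.Icc (1:ℤ) (q-1), (k*p)/q = (-a)*k - 1 := by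
            intro k hk
            simp only [Finset.mem_Icc] at hk
            refine ediv_eq_of (r := q - k) hqpos ?_ (by omega) (by omega)
            rw [hpv, hqv]; ring
          have hsum1 : ∑ k ∈ Finset.Icc (1:ℤ) (q-1), ((k*p)/q)^2
              = ∑ k ∈ Finset.Icc (1:ℤ) (q-1), ((-a)*k - 1)^2 :=
            Finset.sum_congr rfl fun k hk => by rw [hper k hk]
          have hSZ6 : (∑ k ∈ Finset.Icc (1:ℤ) (q-1), ((k*p)/q)^2) * 6
              = 2*(-a)^2*(-b)^3 - 3*(-a)^2*(-b)^2 + (-a)^2*(-b)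
                - 6*(-a)*(-b)^2 + 6*(-a)*(-b) + 6*(-b) - 6 := by
            rw [hsum1, hqv]
            exact sumIcc_sq1 (-a) (-b) (by omega)
          have hSQ : ((∑ k ∈ Finset.Icc (1:ℤ) (q-1), ((k*p)/q)^2 : ℤ) : ℚ)
              = ((2*(-a)^2*(-b)^3 - 3*(-a)^2*(-b)^2 + (-a)^2*(-b)
                - 6*(-a)*(-b)^2 + 6*(-a)*(-b) + 6*(-b) - 6 : ℤ) : ℚ) / 6 := by
            rw [eq_div_iff (by norm_num : (6:ℚ) ≠ 0)]
            exact_mod_cast hSZ6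
          rw [etaInv_eq p q hqpos, hSQ]
          refine div_finisher (Int.cast_ne_zero.2 (show p ≠ 0 by omega))
            (Int.cast_ne_zero.2 (show a*b - 1 ≠ 0 by intro hcon; linarith)) ?_
          rw [htv, hpv, hqv]
          push_cast
          ring

private lemma tau_eq (a b : ℤ) (hab : a*b ≤ -1 ∨ 3 ≤ a*b)
    (A : Matrix (Fin 2) (Fin 2) ℝ) (hA : A = !![(a : ℝ), 1; 1, (b : ℝ)])
    (hAh : A.IsHermitian) :
    ((Finset.univ.filter fun i : Fin 2 => 0 < hAh.eigenvalues i).card : ℤ)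
      - ((Finset.univ.filter fun i : Fin 2 => hAh.eigenvalues i < 0).card : ℤ)
      = if a*b < 0 then 0 else if 0 < a then 2 else -2 := by
  have hdet : hAh.eigenvalues 0 * hAh.eigenvalues 1 = (a:ℝ)*(b:ℝ) - 1 := by
    have h1 := hAh.det_eq_prod_eigenvalues
    rw [Fin.prod_univ_two] at h1
    have h2 : A.det = hAh.eigenvalues 0 * hAh.eigenvalues 1 := by exact_mod_cast h1
    have h3 : A.det = (a:ℝ)*(b:ℝ) - 1*1 := by rw [hA, Matrix.det_fin_two_of]
    linarith
  have hquad : ∀ i, (hAh.eigenvalues i - (a:ℝ)) * (hAh.eigenvalues i - (b:ℝ)) = 1 := by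
    intro i
    have hmem := hAh.eigenvalues_mem_spectrum_real i
    rw [spectrum.mem_iff] at hmem
    set lam := hAh.eigenvalues i with hl
    clear_value lam
    have hM : (algebraMap ℝ (Matrix (Fin 2) (Fin 2) ℝ)) lam - A
        = !![lam - (a:ℝ), -1; -1, lam - (b:ℝ)] := by
      rw [hA]
      ext x y
      fin_cases x <;> fin_cases y <;>
        simp [Matrix.algebraMap_matrix_apply, Matrix.sub_apply]
    rw [hM, Matrix.isUnit_iff_isUnit_det, Matrix.det_fin_two_of, isUnit_iff_ne_zero] at hmem
    push_neg at hmem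
    linear_combination hmem
  rcases hab with hneg | hpos
  · rw [if_pos (show a*b < 0 by linarith)]
    have hdetneg : hAh.eigenvalues 0 * hAh.eigenvalues 1 < 0 := by
      rw [hdet]
      have h : ((a*b : ℤ) : ℝ) ≤ -1 := by exact_mod_cast hneg
      push_cast at h
      linarith
    rcases lt_trichotomy (hAh.eigenvalues 0) 0 with h0 | h0 | h0
    · have h1 : 0 < hAh.eigenvalues 1 := by nlinarith
      have e1 : (Finset.univ.filter fun i : Fin 2 => 0 < hAh.eigenvalues i) = {1} := by
        ext i
        fin_cases i <;> simp [h0.not_gt, h1, Fin.ext_iff]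
      have e2 : (Finset.univ.filter fun i : Fin 2 => hAh.eigenvalues i < 0) = {0} := by
        ext i
        fin_cases i <;> simp [h0, h1.not_gt, Fin.ext_iff]
      rw [e1, e2]
      simp
    · rw [h0, zero_mul] at hdetneg
      exact absurd hdetneg (lt_irrefl 0)
    · have h1 : hAh.eigenvalues 1 < 0 := by nlinarith
      have e1 : (Finset.univ.filter fun i : Fin 2 => 0 < hAh.eigenvalues i) = {0} := by
        ext i
        fin_cases i <;> simp [h0, h1.not_gt, Fin.ext_iff]
      have e2 : (Finset.univ.filter fun i : Fin 2 => hAh.eigenvalues i < 0) = {1} := by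
        ext i
        fin_cases i <;> simp [h0.not_gt, h1, Fin.ext_iff]
      rw [e1, e2]
      simp
  · have habR : (3:ℝ) ≤ (a:ℝ)*(b:ℝ) := by exact_mod_cast hpos
    rw [if_neg (show ¬ a*b < 0 by linarith)]
    rcases lt_or_ge 0 a with ha | ha
    · rw [if_pos ha]
      have hb : (1:ℤ) ≤ b := by nlinarith
      have haR : (1:ℝ) ≤ (a:ℝ) := by exact_mod_cast ha
      have hbR : (1:ℝ) ≤ (b:ℝ) := by exact_mod_cast hb
      have hposall : ∀ i, 0 < hAh.eigenvalues i := by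
        intro i
        by_contra hc
        push_neg at hc
        nlinarith [hquad i, mul_nonneg (neg_nonneg.2 hc) (by linarith : (0:ℝ) ≤ (a:ℝ)+(b:ℝ)),
          sq_nonneg (hAh.eigenvalues i)]
      rw [Finset.filter_true_of_mem (fun i _ => hposall i),
        Finset.filter_false_of_mem (fun i _ => (hposall i).asymm)]
      simp
    · rw [if_neg (not_lt.2 ha)]
      have ha1 : a ≤ 0 := ha
      have hb : b ≤ -1 := by nlinarith
      have haR : (a:ℝ) ≤ 0 := by exact_mod_cast ha1
      have hbR : (b:ℝ) ≤ -1 := by exact_mod_cast hb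
      have hnegall : ∀ i, hAh.eigenvalues i < 0 := by
        intro i
        by_contra hc
        push_neg at hc
        nlinarith [hquad i, mul_nonneg hc (by linarith : (0:ℝ) ≤ -(a:ℝ)-(b:ℝ)),
          sq_nonneg (hAh.eigenvalues i)]
      rw [Finset.filter_true_of_mem (fun i _ => hnegall i),
        Finset.filter_false_of_mem (fun i _ => (hnegall i).asymm)]
      simp

/-- Let `a, b` be integers with `p := |1 − ab| > 1`, let `q` be the integer with
`0 ≤ q < p` and `q ≡ b·sgn(1 − ab) (mod p)`, and let `τ` be the number of positive
eigenvalues minus the number of negative eigenvalues of the real symmetric matrix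
`[[a, 1], [1, b]]`. If the Hitchin–Thorpe inequality `2(3 − 1/p) ≥ 3|τ + η(p,q)|` holds,
then `(a, b) = (2, 2)`, or `(a, b) = (−2, −2)`, or `ab < 0` and `|a + b| ≤ 6`. -/
theorem ale_three_turning_points (a b : ℤ)
    (p : ℤ) (hp : p = |1 - a * b|) (hp1 : 1 < p)
    (q : ℤ) (hq0 : 0 ≤ q) (hqp : q < p)
    (hqmod : q ≡ b * Int.sign (1 - a * b) [ZMOD p])
    (A : Matrix (Fin 2) (Fin 2) ℝ) (hA : A = !![(a : ℝ), 1; 1, (b : ℝ)])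
    (hAh : A.IsHermitian)
    (τ : ℤ)
    (hτ : τ = ((Finset.univ.filter fun i : Fin 2 => 0 < hAh.eigenvalues i).card : ℤ)
        - ((Finset.univ.filter fun i : Fin 2 => hAh.eigenvalues i < 0).card : ℤ))
    (hHT : 2 * (3 - 1 / (p : ℚ)) ≥ 3 * |(τ : ℚ) + etaInv p q|) :
    (a = 2 ∧ b = 2) ∨ (a = -2 ∧ b = -2) ∨ (a * b < 0 ∧ |a + b| ≤ 6) := by
  have hqmod' : q % p = (b * Int.sign (1 - a*b)) % p := hqmod
  have hcase : a*b ≤ -1 ∨ 3 ≤ a*b := by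
    rcases abs_cases (1 - a*b) with ⟨he, _⟩ | ⟨he, _⟩ <;> omega
  have htau : τ = if a*b < 0 then 0 else if 0 < a then 2 else -2 := by
    rw [hτ]; exact tau_eq a b hcase A hA hAh
  have hkey := eta_key a b p q τ hp hp1 hq0 hqp hqmod' htau
  rw [hkey] at hHT
  have hpQ : (0:ℚ) < (p:ℚ) := by exact_mod_cast (show (0:ℤ) < p by omega)
  have hVabs : |((a*b - 1 : ℤ) : ℚ)| = (p:ℚ) := by
    rw [← Int.cast_abs]
    have h : |a*b - 1| = p := by rw [hp, abs_sub_comm]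
    exact_mod_cast h
  have habs : 3 * |((((a+b)*(a*b) : ℤ) : ℚ)) / (3 * ((a*b - 1 : ℤ) : ℚ))|
      = |(((a+b)*(a*b) : ℤ) : ℚ)| / (p:ℚ) := by
    rw [abs_div, abs_mul, hVabs, abs_of_pos (show (0:ℚ) < 3 by norm_num)]
    field_simp
  rw [habs] at hHT
  have hZ : |(a+b)*(a*b)| ≤ 6*p - 2 := by
    have h1 : |(((a+b)*(a*b) : ℤ) : ℚ)| / (p:ℚ) ≤ 2*(3 - 1/(p:ℚ)) := hHT
    rw [div_le_iff₀ hpQ] at h1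
    have h3 : (2*(3 - 1/(p:ℚ)))*(p:ℚ) = 6*(p:ℚ) - 2 := by field_simp; ring
    have h2 : |(((a+b)*(a*b) : ℤ) : ℚ)| ≤ 6*(p:ℚ) - 2 := by linarith
    exact_mod_cast h2
  rcases hcase with hneg | hpos
  · right; right
    refine ⟨by linarith, ?_⟩
    have hp' : p = 1 - a*b := by rw [hp, abs_of_pos (by linarith : (0:ℤ) < 1 - a*b)]
    by_contra hc
    push_neg at hc
    have hc7 : 7 ≤ |a+b| := by omega
    have hane : a ≠ 0 := by rintro rfl; simp at hneg
    have hbne : b ≠ 0 := by rintro rfl; simp at hneg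
    have ha1 : 1 ≤ |a| := Int.one_le_abs hane
    have hb1 : 1 ≤ |b| := Int.one_le_abs hbne
    have hm : |a| * |b| = -(a*b) := by
      rw [← abs_mul, abs_of_neg (by linarith : a*b < 0)]
    have hexp : |a| * |b| - |a| - |b| + 1 ≥ 0 := by
      nlinarith [mul_nonneg (show (0:ℤ) ≤ |a|-1 by omega) (show (0:ℤ) ≤ |b|-1 by omega)]
    have htri := abs_add_le a b
    have hmul : |(a+b)*(a*b)| = |a+b| * (-(a*b)) := by
      rw [abs_mul, abs_of_neg (by linarith : a*b < 0)]
    have h7 : 7*(-(a*b)) ≤ |a+b| * (-(a*b)) :=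
      mul_le_mul_of_nonneg_right hc7 (by linarith)
    rw [hmul, hp'] at hZ
    linarith
  · have hp' : p = a*b - 1 := by
      rw [hp, abs_of_neg (by linarith : (1:ℤ) - a*b < 0)]; ring
    rcases lt_or_ge 0 a with ha | ha
    · left
      have hb1 : 1 ≤ b := by nlinarith
      have ha1 : 1 ≤ a := ha
      have hmul : |(a+b)*(a*b)| = (a+b)*(a*b) :=
        abs_of_pos (mul_pos (by linarith : (0:ℤ) < a+b) (by linarith : (0:ℤ) < a*b))
      rw [hmul, hp'] at hZ
      have ha4 : a ≤ 4 := by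
        by_contra hc'
        push_neg at hc'
        nlinarith [mul_nonneg (show (0:ℤ) ≤ a+b-6 by linarith) (show (0:ℤ) ≤ a*b by linarith)]
      have hb4 : b ≤ 4 := by
        by_contra hc'
        push_neg at hc'
        nlinarith [mul_nonneg (show (0:ℤ) ≤ a+b-6 by linarith) (show (0:ℤ) ≤ a*b by linarith)]
      interval_cases a <;> interval_cases b <;> omega
    · right; left
      have hane : a ≠ 0 := by rintro rfl; norm_num at hpos
      have ha1 : a ≤ -1 := by omega
      have hb1 : b ≤ -1 := by nlinarith
      have hmul : |(a+b)*(a*b)| = -((a+b)*(a*b)) :=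
        abs_of_neg (mul_neg_of_neg_of_pos (by linarith) (by linarith))
      rw [hmul, hp'] at hZ
      have ha4 : -4 ≤ a := by
        by_contra hc'
        push_neg at hc'
        nlinarith [mul_nonneg (show (0:ℤ) ≤ -(a+b)-6 by linarith) (show (0:ℤ) ≤ a*b by linarith)]
      have hb4 : -4 ≤ b := by
        by_contra hc'
        push_neg at hc'
        nlinarith [mul_nonneg (show (0:ℤ) ≤ -(a+b)-6 by linarith) (show (0:ℤ) ≤ a*b by linarith)]
      interval_cases a <;> interval_cases b <;> omega
end
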